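/- arXiv:math/9909009 — 2 statements merged into one kernel-verified Lean document; each statement's English description precedes it below -/
import Mathlib

section
/- Let F be a field and g ∈ F[x_1,…,x_n] a homogeneous polynomial of degree δ, where δ is invertible in F (i.e. the characteristic of F does not divide δ). Let ω ∈ Ω^k be a homogeneous k-form such that dg ∧ ω = 0. Then there exists a homogeneous (k-1)-form α ∈ Ω^{k-1} such that g·ω = dg ∧ α. -/
set_option synthInstance.maxHeartbeats 1000000
set_option maxHeartbeats 1000000
open MvPolynomial

/-- The polynomial ring `𝔽_q[x_1,…,x_n]`. -/
abbrev PolyRing (F : Type) [Field F] (n : ℕ) : Type := MvPolynomial (Fin n) F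

/-- The exterior algebra over `R = F[x_1,…,x_n]` of the free module on `dx_1,…,dx_n`;
the module of differential `k`-forms `Ω^k` is its degree-`k` part. -/
abbrev FormAlgebra (F : Type) [Field F] (n : ℕ) : Type :=
  ExteriorAlgebra (PolyRing F n) (Fin n → PolyRing F n)

/-- `dg = Σ_i (∂g/∂x_i) dx_i` as an element of the exterior algebra. -/
noncomputable def dform {F : Type} [Field F] {n : ℕ} (g : PolyRing F n) : FormAlgebra F n :=
  ExteriorAlgebra.ι (PolyRing F n) (fun j => MvPolynomial.pderiv j g)

/-- `c · dx_{s 0} ∧ ⋯ ∧ dx_{s (k-1)}`. -/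
noncomputable def wedgeMonomial {F : Type} [Field F] {n : ℕ} (k : ℕ) (s : Fin k → Fin n)
    (c : PolyRing F n) : FormAlgebra F n :=
  c • (List.ofFn fun i => ExteriorAlgebra.ι (PolyRing F n)
        (Pi.single (s i) (1 : PolyRing F n))).prod

/-- `ω` is a differential `k`-form, i.e. an `R`-linear combination of `k`-fold wedge
products of the `dx_i`. -/
def IsForm {F : Type} [Field F] {n : ℕ} (k : ℕ) (ω : FormAlgebra F n) : Prop :=
  ω ∈ AddSubgroup.closure {x | ∃ (s : Fin k → Fin n) (c : PolyRing F n), x = wedgeMonomial k s c}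

/-- `ω` is a homogeneous `k`-form whose coefficients are homogeneous polynomials of degree `d`. -/
def IsHomogeneousForm {F : Type} [Field F] {n : ℕ} (k d : ℕ) (ω : FormAlgebra F n) : Prop :=
  ω ∈ AddSubgroup.closure {x | ∃ (s : Fin k → Fin n) (c : PolyRing F n),
    c.IsHomogeneous d ∧ x = wedgeMonomial k s c}

/-- The system of homogeneous equations `g i = 0` defines a smooth complete intersection
in `P^{n-1}`: over an algebraic closure, the only common zero of the `g i` in affine
`n`-space at which the differentials `d(g i)` are linearly dependent is the origin. -/
def IsSmoothCI {F : Type} [Field F] {n : ℕ} {ι : Type} (g : ι → PolyRing F n) : Prop :=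
  ∀ x : Fin n → AlgebraicClosure F,
    (∀ i, MvPolynomial.eval x
      (MvPolynomial.map (algebraMap F (AlgebraicClosure F)) (g i)) = 0) →
    ¬ LinearIndependent (AlgebraicClosure F)
      (fun i => fun j : Fin n => MvPolynomial.eval x
        (MvPolynomial.map (algebraMap F (AlgebraicClosure F)) (MvPolynomial.pderiv j (g i)))) →
    x = 0

/-- `df_{i_1} ∧ ⋯ ∧ df_{i_l}` for the increasing enumeration `i_1 < ⋯ < i_l` of `s`. -/
noncomputable def dWedge {F : Type} [Field F] {n : ℕ} {r : ℕ} (g : Fin r → PolyRing F n)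
    (s : Finset (Fin r)) : FormAlgebra F n :=
  ((s.sort (· ≤ ·)).map fun i => dform (g i)).prod

/-- The polynomial form `(Σ_i a_i (∏_j f_j^{expo j}) df_i/f_i) ∧ Ω_{i_1⋯i_l}`, where
`Ω_{i_1⋯i_l} = (df_{i_1}/f_{i_1}) ∧ ⋯ ∧ (df_{i_l}/f_{i_l})` and `s = {i_1 < ⋯ < i_l}`;
all denominators cancel provided `expo j ≥ 1` for all `j`. -/
noncomputable def clearedThetaOmega {F : Type} [Field F] {n : ℕ} {r : ℕ}
    (g : Fin r → PolyRing F n) (a : Fin r → ℕ) (expo : Fin r → ℕ) (s : Finset (Fin r)) :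
    FormAlgebra F n :=
  ∑ i ∈ sᶜ, ((a i : PolyRing F n) *
      ∏ j, g j ^ (expo j - (if j ∈ insert i s then 1 else 0))) • (dform (g i) * dWedge g s)

/-!
Contraction `ι_E` with the Euler field `E = Σ_i x_i ∂/∂x_i` is an antiderivation, and Euler's
relation says `ι_E dg = δ g`. Hence `0 = ι_E (dg ∧ ω) = δ g ω - dg ∧ ι_E ω`, and
`α = δ⁻¹ ι_E ω` works: `ι_E` lowers the form degree by one and raises the degree of the
homogeneous coefficients by one.
-/

open CliffordAlgebra

section

variable {F : Type} [Field F] {n : ℕ}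

/-- The Euler vector field `Σ_i x_i ∂/∂x_i`, as a functional on `1`-forms. -/
noncomputable def eulerDual (F : Type) [Field F] (n : ℕ) :
    Module.Dual (PolyRing F n) (Fin n → PolyRing F n) :=
  ∑ i, (X i : PolyRing F n) • LinearMap.proj i

theorem eulerDual_apply (v : Fin n → PolyRing F n) : eulerDual F n v = ∑ i, X i * v i := by
  simp [eulerDual]

theorem eulerDual_single (j : Fin n) : eulerDual F n (Pi.single j 1) = X j := by
  simp [eulerDual_apply, Pi.single_apply]

theorem eulerDual_gradient {g : PolyRing F n} {δ : ℕ} (hg : g.IsHomogeneous δ) :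
    eulerDual F n (fun j => pderiv j g) = δ • g := by
  rw [eulerDual_apply, hg.sum_X_mul_pderiv]

theorem isHomogeneousForm_wedgeMonomial {k d : ℕ} (s : Fin k → Fin n) {c : PolyRing F n}
    (hc : c.IsHomogeneous d) : IsHomogeneousForm k d (wedgeMonomial k s c) :=
  AddSubgroup.subset_closure ⟨s, c, hc, rfl⟩

theorem IsHomogeneousForm.map_of_forall_wedgeMonomial {k d k' d' : ℕ}
    (φ : FormAlgebra F n →+ FormAlgebra F n)
    (hφ : ∀ s c, c.IsHomogeneous d → IsHomogeneousForm k' d' (φ (wedgeMonomial k s c)))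
    {ω : FormAlgebra F n} (hω : IsHomogeneousForm k d ω) : IsHomogeneousForm k' d' (φ ω) :=
  (AddSubgroup.closure_le ((AddSubgroup.closure _).comap φ)).mpr
    (by rintro _ ⟨s, c, hc, rfl⟩; exact hφ s c hc) hω

theorem wedgeMonomial_zero (s : Fin 0 → Fin n) (c : PolyRing F n) :
    wedgeMonomial 0 s c = algebraMap _ _ c := by
  simp [wedgeMonomial, Algebra.algebraMap_eq_smul_one]

theorem wedgeMonomial_succ {k : ℕ} (s : Fin (k + 1) → Fin n) (c : PolyRing F n) :
    wedgeMonomial (k + 1) s c =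
      ExteriorAlgebra.ι _ (Pi.single (s 0) 1) * wedgeMonomial k (Fin.tail s) c := by
  simp only [wedgeMonomial, List.ofFn_succ, List.prod_cons, mul_smul_comm]
  rfl

theorem IsHomogeneousForm.smul {k d e : ℕ} {p : PolyRing F n} (hp : p.IsHomogeneous e)
    {ω : FormAlgebra F n} (hω : IsHomogeneousForm k d ω) : IsHomogeneousForm k (e + d) (p • ω) :=
  hω.map_of_forall_wedgeMonomial (DistribSMul.toAddMonoidHom _ p) fun s c hc => by
    simpa [wedgeMonomial, smul_smul] using isHomogeneousForm_wedgeMonomial s (hp.mul hc)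

theorem IsHomogeneousForm.ι_single_mul {k d : ℕ} (j : Fin n) {ω : FormAlgebra F n}
    (hω : IsHomogeneousForm k d ω) :
    IsHomogeneousForm (k + 1) d (ExteriorAlgebra.ι _ (Pi.single j 1) * ω) :=
  hω.map_of_forall_wedgeMonomial (AddMonoidHom.mulLeft _) fun s c hc => by
    simpa [wedgeMonomial_succ] using isHomogeneousForm_wedgeMonomial (Fin.cons j s) hc

section contraction

variable {f : Module.Dual (PolyRing F n) (Fin n → PolyRing F n)} {m : ℕ}

theorem isHomogeneousForm_contractLeft_wedgeMonomial
    (hf : ∀ j, (f (Pi.single j 1)).IsHomogeneous m) {d : ℕ} :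
    ∀ (k : ℕ) (s : Fin k → Fin n) {c : PolyRing F n}, c.IsHomogeneous d →
      IsHomogeneousForm (k - 1) (m + d) (contractLeft f (wedgeMonomial k s c))
  | 0, s, c, _ => by
    rw [wedgeMonomial_zero, contractLeft_algebraMap]
    exact zero_mem _
  | k + 1, s, c, hc => by
    rw [wedgeMonomial_succ, contractLeft_ι_mul]
    refine sub_mem ((isHomogeneousForm_wedgeMonomial _ hc).smul (hf _)) ?_
    obtain rfl | hk := Nat.eq_zero_or_pos k
    · rw [wedgeMonomial_zero, contractLeft_algebraMap, mul_zero]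
      exact zero_mem _
    · have := (isHomogeneousForm_contractLeft_wedgeMonomial hf k (Fin.tail s) hc).ι_single_mul
        (s 0)
      rwa [Nat.sub_add_cancel hk] at this

theorem IsHomogeneousForm.contractLeft (hf : ∀ j, (f (Pi.single j 1)).IsHomogeneous m)
    {k d : ℕ} {ω : FormAlgebra F n} (hω : IsHomogeneousForm k d ω) :
    IsHomogeneousForm (k - 1) (m + d) (CliffordAlgebra.contractLeft f ω) :=
  hω.map_of_forall_wedgeMonomial (CliffordAlgebra.contractLeft f).toAddMonoidHom fun s _ hc =>
    isHomogeneousForm_contractLeft_wedgeMonomial hf _ s hc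

end contraction

theorem contractLeft_eulerDual_dform_mul {g : PolyRing F n} {δ : ℕ} (hg : g.IsHomogeneous δ)
    (ω : FormAlgebra F n) :
    contractLeft (eulerDual F n) (dform g * ω) =
      (δ • g) • ω - dform g * contractLeft (eulerDual F n) ω := by
  rw [dform, contractLeft_ι_mul, eulerDual_gradient hg]

end

/-- If `g` is homogeneous of degree `δ` with `δ` invertible in `F`, and `ω` is a homogeneous
`k`-form with `dg ∧ ω = 0`, then `g·ω = dg ∧ α` for some homogeneous `(k-1)`-form `α`. -/
theorem de_rham_division_by_dg {F : Type} [Field F] {n : ℕ} (g : MvPolynomial (Fin n) F)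
    (δ : ℕ) (hg : g.IsHomogeneous δ) (hδ : (δ : F) ≠ 0)
    (k d : ℕ) (ω : FormAlgebra F n) (hω : IsHomogeneousForm k d ω)
    (hker : dform g * ω = 0) :
    ∃ (e : ℕ) (α : FormAlgebra F n), IsHomogeneousForm (k - 1) e α ∧ g • ω = dform g * α := by
  have hdiv : (δ • g) • ω = dform g * contractLeft (eulerDual F n) ω := by
    rw [← sub_eq_zero, ← contractLeft_eulerDual_dform_mul hg, hker, map_zero]
  have hα := (hω.contractLeft (f := eulerDual F n) fun j => by
    simpa only [eulerDual_single] using isHomogeneous_X F j).smul (isHomogeneous_C _ (δ : F)⁻¹)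
  refine ⟨_, _, hα, ?_⟩
  rw [mul_smul_comm, ← hdiv, smul_smul, nsmul_eq_mul, ← mul_assoc, ← map_natCast C, ← C_mul,
    inv_mul_cancel₀ hδ, C_1, one_mul]
end

section
/- Let 𝔽_q be a finite field of characteristic p, and let f_{i_1},…,f_{i_l} (l ≥ 1) and g be homogeneous polynomials in 𝔽_q[x_1,…,x_n] with p ∤ deg g, such that f_{i_1} = ⋯ = f_{i_l} = 0 defines a smooth complete intersection of codimension l in P^{n-1} and g = f_{i_1} = ⋯ = f_{i_l} = 0 defines a smooth complete intersection of codimension l+1 in P^{n-1}. Then, over an algebraic closure of 𝔽_q, the only common zero in affine n-space of f_{i_1},…,f_{i_l} together with all (l+1) × (l+1) minors of the (l+1) × n Jacobian matrix of (g, f_{i_1},…,f_{i_l}) is the origin. Equivalently, the coefficients of the (l+1)-form dg ∧ df_{i_1} ∧ ⋯ ∧ df_{i_l} with respect to the basis of (l+1)-fold exterior products of dx_1,…,dx_n, together with f_{i_1},…,f_{i_l}, generate an ideal of 𝔽_q[x_1,…,x_n] whose radical is (x_1,…,x_n). -/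
set_option synthInstance.maxHeartbeats 1000000
set_option maxHeartbeats 1000000
open MvPolynomial

/-! Let `x ≠ 0` be a common zero of the `f_i` at which `dg, df_1, …, df_l` are dependent.
Smoothness of `{f = 0}` makes the `df_i(x)` independent, so `dg(x)` is a combination of them.
Pairing with `x` and Euler's identity `Σ_j x_j ∂h/∂x_j = deg h · h` kill every `df_i(x)`, which
gives `deg g · g(x) = 0`, hence `g(x) = 0` as `p ∤ deg g`. Then `x` contradicts smoothness of
`{g = f = 0}`. -/

namespace MvPolynomial

variable {σ R S : Type*} [CommSemiring R] [CommSemiring S] [Algebra R S]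

noncomputable def gradientAt (x : σ → S) (φ : MvPolynomial σ R) : σ → S :=
  fun j => aeval x (pderiv j φ)

theorem eval_map_pderiv_eq_gradientAt (x : σ → S) (φ : MvPolynomial σ R) (j : σ) :
    eval x (map (algebraMap R S) (pderiv j φ)) = gradientAt x φ j := by
  rw [gradientAt, eval_map, aeval_def]

variable [Fintype σ]

theorem IsHomogeneous.sum_mul_gradientAt {φ : MvPolynomial σ R} {d : ℕ}
    (hφ : φ.IsHomogeneous d) (x : σ → S) :
    ∑ j, x j * gradientAt x φ j = d • MvPolynomial.aeval x φ := by
  simpa only [gradientAt, map_sum, map_mul, aeval_X, map_nsmul] using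
    congrArg (MvPolynomial.aeval x) hφ.sum_X_mul_pderiv

theorem IsHomogeneous.aeval_eq_zero_of_gradientAt_mem_span {K ι : Type*} [Field K] [Algebra R K]
    {ψ : MvPolynomial σ R} {d : ℕ} (hψ : ψ.IsHomogeneous d) (hd : (d : K) ≠ 0)
    {φ : ι → MvPolynomial σ R} {e : ι → ℕ} (hφ : ∀ i, (φ i).IsHomogeneous (e i))
    {x : σ → K} (hx : ∀ i, MvPolynomial.aeval x (φ i) = 0)
    (hmem : gradientAt x ψ ∈ Submodule.span K (Set.range fun i => gradientAt x (φ i))) :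
    MvPolynomial.aeval x ψ = 0 := by
  set pairing := Fintype.linearCombination K x
  have pairing_gradientAt : ∀ {χ : MvPolynomial σ R} {k : ℕ}, χ.IsHomogeneous k →
      pairing (gradientAt x χ) = k • MvPolynomial.aeval x χ := fun hχ => by
    rw [Fintype.linearCombination_apply, ← hχ.sum_mul_gradientAt x]
    simp only [smul_eq_mul, mul_comm]
  have hspan : Submodule.span K (Set.range fun i => gradientAt x (φ i)) ≤
      LinearMap.ker pairing := by
    rw [Submodule.span_le]
    rintro _ ⟨i, rfl⟩
    simp [pairing_gradientAt (hφ i), hx i]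
  have hzero : (d : K) * MvPolynomial.aeval x ψ = 0 := by
    rw [← nsmul_eq_mul, ← pairing_gradientAt hψ]
    exact hspan hmem
  exact (mul_eq_zero.mp hzero).resolve_left hd

end MvPolynomial

theorem jacobian_ideal_depth_general {F : Type} [Field F] {p n : ℕ} [CharP F p]
    {l : ℕ}
    (g0 : MvPolynomial (Fin n) F) (gs : Fin l → MvPolynomial (Fin n) F)
    (d0 : ℕ) (dd : Fin l → ℕ)
    (hg0 : g0.IsHomogeneous d0) (hgs : ∀ i, (gs i).IsHomogeneous (dd i))
    (hpd : ¬ (p ∣ d0))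
    (hCI : IsSmoothCI gs)
    (hCI' : IsSmoothCI (fun i : Option (Fin l) => i.elim g0 gs)) :
    ∀ x : Fin n → AlgebraicClosure F,
      (∀ i : Fin l, MvPolynomial.eval x
        (MvPolynomial.map (algebraMap F (AlgebraicClosure F)) (gs i)) = 0) →
      ¬ LinearIndependent (AlgebraicClosure F)
        (fun i : Option (Fin l) => fun j : Fin n => MvPolynomial.eval x
          (MvPolynomial.map (algebraMap F (AlgebraicClosure F))
            (MvPolynomial.pderiv j (i.elim g0 gs)))) →
      x = 0 := by
  intro x hx hdep
  have hdep' : ¬ LinearIndependent (AlgebraicClosure F) fun i : Option (Fin l) =>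
      gradientAt x (i.elim g0 gs) := by
    simpa only [eval_map_pderiv_eq_gradientAt] using hdep
  have hxK : ∀ i, aeval x (gs i) = 0 := fun i => (eval_map _ _ _).symm.trans (hx i)
  by_cases hind : LinearIndependent (AlgebraicClosure F) fun i => gradientAt x (gs i)
  · have hmem : gradientAt x g0 ∈
        Submodule.span (AlgebraicClosure F) (Set.range fun i => gradientAt x (gs i)) :=
      not_not.mp fun hnot => hdep' (linearIndependent_option.mpr ⟨hind, hnot⟩)
    have hd0 : (d0 : AlgebraicClosure F) ≠ 0 := by
      rwa [Ne, CharP.cast_eq_zero_iff (AlgebraicClosure F) p]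
    have hg0 : aeval x g0 = 0 := hg0.aeval_eq_zero_of_gradientAt_mem_span hd0 hgs hxK hmem
    refine hCI' x (fun i => ?_) hdep
    cases i with
    | none => exact (eval_map _ _ _).trans hg0
    | some i => exact hx i
  · exact hCI x hx (by simpa only [eval_map_pderiv_eq_gradientAt] using hind)

/-- Key geometric claim in the proof of Lemma 5.9: if `f_{i_1} = ⋯ = f_{i_l} = 0` and
`g = f_{i_1} = ⋯ = f_{i_l} = 0` are smooth complete intersections in `P^{n-1}` and
`p ∤ deg g`, then the only common zero of `f_{i_1},…,f_{i_l}` (over an algebraic closure)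
at which the differentials `dg, df_{i_1}, …, df_{i_l}` are linearly dependent
(equivalently, at which all `(l+1) × (l+1)` minors of the Jacobian of
`(g, f_{i_1},…,f_{i_l})` vanish) is the origin. -/
theorem jacobian_ideal_depth {F : Type} [Field F] [Fintype F] {p n : ℕ} [CharP F p]
    (hp : p.Prime) {l : ℕ} (hl : 1 ≤ l)
    (g0 : MvPolynomial (Fin n) F) (gs : Fin l → MvPolynomial (Fin n) F)
    (d0 : ℕ) (dd : Fin l → ℕ)
    (hg0 : g0.IsHomogeneous d0) (hgs : ∀ i, (gs i).IsHomogeneous (dd i))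
    (hpd : ¬ (p ∣ d0))
    (hCI : IsSmoothCI gs)
    (hCI' : IsSmoothCI (fun i : Option (Fin l) => i.elim g0 gs)) :
    ∀ x : Fin n → AlgebraicClosure F,
      (∀ i : Fin l, MvPolynomial.eval x
        (MvPolynomial.map (algebraMap F (AlgebraicClosure F)) (gs i)) = 0) →
      ¬ LinearIndependent (AlgebraicClosure F)
        (fun i : Option (Fin l) => fun j : Fin n => MvPolynomial.eval x
          (MvPolynomial.map (algebraMap F (AlgebraicClosure F))
            (MvPolynomial.pderiv j (i.elim g0 gs)))) →
      x = 0 :=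
  jacobian_ideal_depth_general g0 gs d0 dd hg0 hgs hpd hCI hCI'
end
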